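/- Let D ≥ 1, N ≥ 2, let x_1, …, x_N ∈ ℝ^D be pairwise distinct, let ε > 0, and let ρ > 0 be a real number with ‖x_i − x_j‖ ≤ ρ for all i, j. Then there exists a coupling λ of the mixture measure ν_ε and the empirical measure μ_X = (1/N)·Σ_{i=1}^N δ_{x_i} such that ∫_{ℝ^D × ℝ^D} ‖x − y‖² dλ(x,y) ≤ ρ²·(ε²·D + 1). -/

import Mathlib

open MeasureTheory Real ENNReal

/-- The Gaussian density on `ℝ^D` with center `x` and scale `σ`:
`g_{x,σ}(y) = (2πσ²)^{-D/2} · exp(−‖y−x‖²/(2σ²))`. -/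
noncomputable def gaussDensity (D : ℕ) (x : EuclideanSpace ℝ (Fin D)) (σ : ℝ)
    (y : EuclideanSpace ℝ (Fin D)) : ℝ :=
  (2 * Real.pi * σ ^ 2) ^ (-(D : ℝ) / 2) * Real.exp (-‖y - x‖ ^ 2 / (2 * σ ^ 2))

/-- `min_{j ≠ i} ‖x_i − x_j‖`, the distance from `x_i` to its nearest other point. -/
noncomputable def minDist {D N : ℕ} (hN : 2 ≤ N) (x : Fin N → EuclideanSpace ℝ (Fin D))
    (i : Fin N) : ℝ :=
  (Finset.univ.erase i).inf'
    (by
      rw [← Finset.card_pos, Finset.card_erase_of_mem (Finset.mem_univ i),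
        Finset.card_univ, Fintype.card_fin]
      omega)
    fun j => ‖x i - x j‖

/-- The adaptive bandwidth `σ_i(ε) = ε · ln(1 + min_{j ≠ i} ‖x_i − x_j‖)`. -/
noncomputable def sigmaEps {D N : ℕ} (hN : 2 ≤ N) (x : Fin N → EuclideanSpace ℝ (Fin D))
    (ε : ℝ) (i : Fin N) : ℝ :=
  ε * Real.log (1 + minDist hN x i)

/-- The mixture representation `f_{X,σ(ε)}(y) = (1/N)·Σ_i g_{x_i, σ_i(ε)}(y)`. -/
noncomputable def mixtureDensity {D N : ℕ} (hN : 2 ≤ N) (x : Fin N → EuclideanSpace ℝ (Fin D))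
    (ε : ℝ) (y : EuclideanSpace ℝ (Fin D)) : ℝ :=
  (1 / (N : ℝ)) * ∑ i, gaussDensity D (x i) (sigmaEps hN x ε i) y

/-- The measure `ν_ε` on `ℝ^D` with Lebesgue density `f_{X,σ(ε)}`. -/
noncomputable def mixtureMeasure {D N : ℕ} (hN : 2 ≤ N) (x : Fin N → EuclideanSpace ℝ (Fin D))
    (ε : ℝ) : Measure (EuclideanSpace ℝ (Fin D)) :=
  volume.withDensity fun y => ENNReal.ofReal (mixtureDensity hN x ε y)

/-- The empirical measure `μ_X = (1/N)·Σ_i δ_{x_i}`. -/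
noncomputable def empiricalMeasure {D N : ℕ} (x : Fin N → EuclideanSpace ℝ (Fin D)) :
    Measure (EuclideanSpace ℝ (Fin D)) :=
  ((N : ℝ≥0∞))⁻¹ • ∑ i, Measure.dirac (x i)

/-! Couple each Gaussian component of the mixture with the Dirac mass at its own centre `x_i`,
and average over `i`. The `i`-th component is the image of the product of the one-dimensional
Gaussians `N((x_i)_k, σ_i²)`, so its quadratic cost is the sum of their variances, `D σ_i²`; and
`σ_i = ε ln(1 + min_{j ≠ i} ‖x_i - x_j‖) ≤ ε ρ` because `ln(1 + t) ≤ t`. -/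

open ProbabilityTheory
open scoped NNReal

theorem MeasureTheory.Measure.pi_withDensity_ofReal {ι : Type*} [Fintype ι] {α : ι → Type*}
    [∀ i, MeasurableSpace (α i)] {μ : ∀ i, Measure (α i)} [∀ i, SigmaFinite (μ i)]
    {f : ∀ i, α i → ℝ} (hf : ∀ i, Integrable (f i) (μ i)) (hf_nonneg : ∀ i, 0 ≤ f i) :
    Measure.pi (fun i => (μ i).withDensity (fun t => ENNReal.ofReal (f i t))) =
      (Measure.pi μ).withDensity (fun x => ∏ i, ENNReal.ofReal (f i (x i))) := by
  have : ∀ i, IsFiniteMeasure ((μ i).withDensity fun t => ENNReal.ofReal (f i t)) :=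
    fun i => isFiniteMeasure_withDensity_ofReal (hf i).hasFiniteIntegral
  refine Measure.pi_eq fun s hs => ?_
  rw [withDensity_apply _ (MeasurableSet.univ_pi hs), Measure.restrict_pi_pi]
  simp_rw [withDensity_apply _ (hs _), ← ENNReal.ofReal_prod_of_nonneg fun i _ => hf_nonneg i _]
  rw [← ofReal_integral_eq_lintegral_ofReal (Integrable.fintype_prod_dep fun i => (hf i).restrict)
      (Filter.Eventually.of_forall fun x => Finset.prod_nonneg fun i _ => hf_nonneg i _),
    integral_fintype_prod_eq_prod, ENNReal.ofReal_prod_of_nonneg fun i _ =>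
      integral_nonneg (hf_nonneg i)]
  congr 1 with i
  exact ofReal_integral_eq_lintegral_ofReal (hf i).restrict
    (Filter.Eventually.of_forall (hf_nonneg i))

theorem MeasurableEquiv.withDensity_map {α β : Type*} [MeasurableSpace α] [MeasurableSpace β]
    (e : α ≃ᵐ β) (μ : Measure α) (f : β → ℝ≥0∞) :
    (μ.map e).withDensity f = (μ.withDensity (f ∘ e)).map e := by
  ext s hs
  rw [withDensity_apply _ hs, e.map_apply, withDensity_apply _ (e.measurable hs),
    e.restrict_map, lintegral_map_equiv]
  rfl

theorem MeasureTheory.withDensity_fintype_sum {α ι : Type*} [MeasurableSpace α] [Fintype ι]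
    (μ : Measure α) {f : ι → α → ℝ≥0∞} (hf : ∀ i, Measurable (f i)) :
    μ.withDensity (fun a => ∑ i, f i a) = ∑ i, μ.withDensity (f i) := by
  rw [← Measure.sum_fintype, ← withDensity_tsum hf, tsum_fintype]
  congr with a
  simp

theorem pi_gaussianReal_eq_withDensity {ι : Type*} [Fintype ι] (c : ι → ℝ) {v : ι → ℝ≥0}
    (hv : ∀ i, v i ≠ 0) :
    Measure.pi (fun i => gaussianReal (c i) (v i)) =
      volume.withDensity (fun x => ∏ i, gaussianPDF (c i) (v i) (x i)) := by
  simp_rw [gaussianReal_of_var_ne_zero _ (hv _), gaussianPDF]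
  exact Measure.pi_withDensity_ofReal (fun i => integrable_gaussianPDFReal _ _)
    (fun i => gaussianPDFReal_nonneg _ _)

theorem lintegral_sq_sub_gaussianReal (μ : ℝ) (v : ℝ≥0) :
    ∫⁻ t, ENNReal.ofReal ((t - μ) ^ 2) ∂gaussianReal μ v = v := by
  have h := (memLp_id_gaussianReal (μ := μ) (v := v) 2).ofReal_variance_eq
  rw [variance_id_gaussianReal, ENNReal.ofReal_coe_nnreal, evariance] at h
  simp only [id_eq, integral_id_gaussianReal] at h
  rw [h]
  congr 1 with t
  rw [Real.enorm_eq_ofReal_abs, ← ENNReal.ofReal_pow (abs_nonneg _), sq_abs]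

theorem lintegral_sum_sq_sub_pi_gaussianReal {ι : Type*} [Fintype ι] (c : ι → ℝ) (v : ι → ℝ≥0) :
    ∫⁻ x, ENNReal.ofReal (∑ i, (x i - c i) ^ 2) ∂Measure.pi (fun i => gaussianReal (c i) (v i)) =
      ∑ i, (v i : ℝ≥0∞) := by
  simp_rw [ENNReal.ofReal_sum_of_nonneg fun i _ => sq_nonneg (_ - c i)]
  rw [lintegral_finsetSum _ fun i _ => by fun_prop]
  congr 1 with i
  rw [← lintegral_sq_sub_gaussianReal (c i) (v i),
    ← (measurePreserving_eval (fun i => gaussianReal (c i) (v i)) i).lintegral_comp (by fun_prop)]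

theorem gaussDensity_toLp {D : ℕ} (c : EuclideanSpace ℝ (Fin D)) (σ : ℝ) (x : Fin D → ℝ) :
    gaussDensity D c σ (WithLp.toLp 2 x) =
      ∏ i, gaussianPDFReal (c i) (σ ^ 2).toNNReal (x i) := by
  have hσ2 : (((σ ^ 2).toNNReal : ℝ≥0) : ℝ) = σ ^ 2 := Real.coe_toNNReal _ (sq_nonneg σ)
  have hcoef : (2 * π * σ ^ 2) ^ (-(D : ℝ) / 2) = (√(2 * π * σ ^ 2))⁻¹ ^ D := by
    rw [Real.sqrt_eq_rpow, ← Real.rpow_neg (by positivity), ← Real.rpow_natCast _ D,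
      ← Real.rpow_mul (by positivity)]
    ring_nf
  simp only [gaussianPDFReal, hσ2, Finset.prod_mul_distrib, Finset.prod_const, Finset.card_univ,
    Fintype.card_fin, ← Real.exp_sum, gaussDensity, hcoef, EuclideanSpace.real_norm_sq_eq]
  congr 2
  rw [neg_div, Finset.sum_div, ← Finset.sum_neg_distrib]
  simp [neg_div]

noncomputable def gaussMeasure (D : ℕ) (c : EuclideanSpace ℝ (Fin D)) (σ : ℝ) :
    Measure (EuclideanSpace ℝ (Fin D)) :=
  volume.withDensity fun y => ENNReal.ofReal (gaussDensity D c σ y)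

section gaussMeasure

variable {D : ℕ} (c : EuclideanSpace ℝ (Fin D)) {σ : ℝ}

theorem gaussMeasure_eq_map_pi_gaussianReal (hσ : σ ≠ 0) :
    gaussMeasure D c σ =
      (Measure.pi fun i => gaussianReal (c i) (σ ^ 2).toNNReal).map (WithLp.toLp 2) := by
  rw [pi_gaussianReal_eq_withDensity c fun _ => by simpa using hσ, gaussMeasure,
    ← (PiLp.volume_preserving_toLp (Fin D)).map_eq, ← MeasurableEquiv.coe_toLp,
    MeasurableEquiv.withDensity_map]
  congr 2 with x
  simp [gaussDensity_toLp, gaussianPDF, ENNReal.ofReal_prod_of_nonneg, gaussianPDFReal_nonneg]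

theorem isProbabilityMeasure_gaussMeasure (hσ : σ ≠ 0) :
    IsProbabilityMeasure (gaussMeasure D c σ) := by
  rw [gaussMeasure_eq_map_pi_gaussianReal c hσ]
  exact Measure.isProbabilityMeasure_map (by fun_prop)

theorem lintegral_sq_norm_sub_gaussMeasure (hσ : σ ≠ 0) :
    ∫⁻ y, ENNReal.ofReal (‖y - c‖ ^ 2) ∂gaussMeasure D c σ = ENNReal.ofReal (D * σ ^ 2) := by
  rw [gaussMeasure_eq_map_pi_gaussianReal c hσ, lintegral_map (by fun_prop) (by fun_prop)]
  simp_rw [EuclideanSpace.real_norm_sq_eq, WithLp.ofLp_sub, Pi.sub_apply]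
  rw [lintegral_sum_sq_sub_pi_gaussianReal, Finset.sum_const, Finset.card_univ, Fintype.card_fin,
    nsmul_eq_mul, ENNReal.ofReal_mul (Nat.cast_nonneg _), ENNReal.ofReal_natCast]
  rfl

end gaussMeasure

theorem gaussDensity_nonneg (D : ℕ) (c : EuclideanSpace ℝ (Fin D)) (σ : ℝ)
    (y : EuclideanSpace ℝ (Fin D)) : 0 ≤ gaussDensity D c σ y := by
  unfold gaussDensity
  positivity

theorem measurable_gaussDensity (D : ℕ) (c : EuclideanSpace ℝ (Fin D)) (σ : ℝ) :
    Measurable (gaussDensity D c σ) := by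
  unfold gaussDensity
  fun_prop

theorem mixtureMeasure_eq_smul_sum_gaussMeasure {D N : ℕ} (hN : 2 ≤ N)
    (x : Fin N → EuclideanSpace ℝ (Fin D)) (ε : ℝ) :
    mixtureMeasure hN x ε = (N : ℝ≥0∞)⁻¹ • ∑ i, gaussMeasure D (x i) (sigmaEps hN x ε i) := by
  have hdensity : (fun y => ENNReal.ofReal (mixtureDensity hN x ε y)) =
      (N : ℝ≥0∞)⁻¹ • fun y => ∑ i, ENNReal.ofReal (gaussDensity D (x i) (sigmaEps hN x ε i) y) := by
    ext y
    rw [mixtureDensity, ENNReal.ofReal_mul (by positivity), one_div,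
      ENNReal.ofReal_inv_of_pos (by positivity), ENNReal.ofReal_natCast,
      ENNReal.ofReal_sum_of_nonneg fun i _ => gaussDensity_nonneg _ _ _ _]
    simp
  have hmeas : ∀ i, Measurable fun y =>
      ENNReal.ofReal (gaussDensity D (x i) (sigmaEps hN x ε i) y) :=
    fun i => (measurable_gaussDensity _ _ _).ennreal_ofReal
  rw [mixtureMeasure, hdensity, withDensity_smul _ (Finset.measurable_sum _ fun i _ => hmeas i),
    withDensity_fintype_sum _ hmeas]
  rfl

section mixtureCoupling

variable {α β ι : Type*} [MeasurableSpace α] [MeasurableSpace β] [Fintype ι]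

noncomputable def mixtureCoupling (μ : ι → Measure α) (b : ι → β) : Measure (α × β) :=
  (Fintype.card ι : ℝ≥0∞)⁻¹ • ∑ i, (μ i).prod (Measure.dirac (b i))

variable (μ : ι → Measure α) (b : ι → β)

theorem map_fst_mixtureCoupling [∀ i, SFinite (μ i)] :
    (mixtureCoupling μ b).map Prod.fst = (Fintype.card ι : ℝ≥0∞)⁻¹ • ∑ i, μ i := by
  simp [mixtureCoupling, Measure.map_smul, Measure.map_finset_sum' measurable_fst.aemeasurable]

theorem map_snd_mixtureCoupling [∀ i, IsProbabilityMeasure (μ i)] :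
    (mixtureCoupling μ b).map Prod.snd =
      (Fintype.card ι : ℝ≥0∞)⁻¹ • ∑ i, Measure.dirac (b i) := by
  simp [mixtureCoupling, Measure.map_smul, Measure.map_finset_sum' measurable_snd.aemeasurable]

theorem isProbabilityMeasure_mixtureCoupling [Nonempty ι] [∀ i, IsProbabilityMeasure (μ i)] :
    IsProbabilityMeasure (mixtureCoupling μ b) := by
  constructor
  simp [mixtureCoupling, ENNReal.inv_mul_cancel]

theorem lintegral_mixtureCoupling [∀ i, SFinite (μ i)] {f : α × β → ℝ≥0∞} (hf : Measurable f) :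
    ∫⁻ p, f p ∂mixtureCoupling μ b =
      (Fintype.card ι : ℝ≥0∞)⁻¹ * ∑ i, ∫⁻ a, f (a, b i) ∂μ i := by
  simp only [mixtureCoupling, lintegral_smul_measure, lintegral_finsetSum_measure, smul_eq_mul,
    Measure.prod_dirac, lintegral_map hf measurable_prodMk_right]

end mixtureCoupling

section sigmaEps

variable {D N : ℕ} (hN : 2 ≤ N) {x : Fin N → EuclideanSpace ℝ (Fin D)}

theorem minDist_pos (hx : Function.Injective x) (i : Fin N) : 0 < minDist hN x i :=
  (Finset.lt_inf'_iff _).2 fun _ hj =>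
    norm_pos_iff.2 (sub_ne_zero.2 (hx.ne (Finset.ne_of_mem_erase hj).symm))

theorem minDist_le {ρ : ℝ} (hρ : ∀ i j, ‖x i - x j‖ ≤ ρ) (i : Fin N) : minDist hN x i ≤ ρ := by
  obtain ⟨j, hj⟩ := (Finset.univ_nontrivial_iff.2 (Fin.nontrivial_iff_two_le.2 hN)).erase_nonempty
    (a := i)
  exact Finset.inf'_le_of_le _ hj (hρ i j)

theorem sigmaEps_ne_zero (hx : Function.Injective x) {ε : ℝ} (hε : ε ≠ 0) (i : Fin N) :
    sigmaEps hN x ε i ≠ 0 :=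
  mul_ne_zero hε (Real.log_pos (by linarith [minDist_pos hN hx i])).ne'

theorem sq_sigmaEps_le {ρ : ℝ} (hρ : ∀ i j, ‖x i - x j‖ ≤ ρ) (ε : ℝ) (i : Fin N) :
    sigmaEps hN x ε i ^ 2 ≤ ε ^ 2 * ρ ^ 2 := by
  have hm : 0 ≤ minDist hN x i := Finset.le_inf' _ _ fun _ _ => norm_nonneg _
  have hlog_nonneg : 0 ≤ Real.log (1 + minDist hN x i) := Real.log_nonneg (by linarith)
  have hlog_le : Real.log (1 + minDist hN x i) ≤ ρ :=
    (Real.log_le_sub_one_of_pos (by linarith)).trans (by linarith [minDist_le hN hρ i])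
  rw [sigmaEps, mul_pow]
  gcongr

end sigmaEps

theorem exists_coupling_cost_le_rho_general {D N : ℕ} (hN : 2 ≤ N)
    (x : Fin N → EuclideanSpace ℝ (Fin D)) (hx : Function.Injective x)
    (ε : ℝ) (hε : 0 < ε) (ρ : ℝ) (hρ : ∀ i j, ‖x i - x j‖ ≤ ρ) :
    ∃ lam : Measure (EuclideanSpace ℝ (Fin D) × EuclideanSpace ℝ (Fin D)),
      IsProbabilityMeasure lam ∧
      lam.map Prod.fst = mixtureMeasure hN x ε ∧
      lam.map Prod.snd = empiricalMeasure x ∧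
      ∫⁻ p, ENNReal.ofReal (‖p.1 - p.2‖ ^ 2) ∂lam ≤
        ENNReal.ofReal (ρ ^ 2 * (ε ^ 2 * (D : ℝ) + 1)) := by
  set σ := sigmaEps hN x ε
  have hσ : ∀ i, σ i ≠ 0 := sigmaEps_ne_zero hN hx hε.ne'
  have := fun i => isProbabilityMeasure_gaussMeasure (x i) (hσ i)
  have : Nonempty (Fin N) := ⟨⟨0, by omega⟩⟩
  have hN0 : (N : ℝ≥0∞) ≠ 0 := Nat.cast_ne_zero.2 (by omega)
  refine ⟨mixtureCoupling (fun i => gaussMeasure D (x i) (σ i)) x,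
    isProbabilityMeasure_mixtureCoupling _ _, ?_, ?_, ?_⟩
  · rw [map_fst_mixtureCoupling, mixtureMeasure_eq_smul_sum_gaussMeasure, Fintype.card_fin]
  · rw [map_snd_mixtureCoupling, empiricalMeasure, Fintype.card_fin]
  · rw [lintegral_mixtureCoupling _ _ (by fun_prop), Fintype.card_fin]
    simp_rw [lintegral_sq_norm_sub_gaussMeasure _ (hσ _)]
    calc (N : ℝ≥0∞)⁻¹ * ∑ i, ENNReal.ofReal (D * σ i ^ 2)
        ≤ (N : ℝ≥0∞)⁻¹ * ∑ _i : Fin N, ENNReal.ofReal (ρ ^ 2 * (ε ^ 2 * D + 1)) := by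
          refine mul_le_mul_right (Finset.sum_le_sum fun i _ => ENNReal.ofReal_le_ofReal ?_) _
          nlinarith [sq_sigmaEps_le hN hρ ε i, sq_nonneg ρ, (Nat.cast_nonneg D : (0 : ℝ) ≤ D)]
      _ = ENNReal.ofReal (ρ ^ 2 * (ε ^ 2 * D + 1)) := by
          rw [Finset.sum_const, Finset.card_univ, Fintype.card_fin, nsmul_eq_mul, ← mul_assoc,
            ENNReal.inv_mul_cancel hN0 (ENNReal.natCast_ne_top N), one_mul]

/-- if `ρ > 0` bounds all pairwise distances, there is a coupling of the
mixture measure `ν_ε` and the empirical measure `μ_X` with quadratic transport cost at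
most `ρ²·(ε²·D + 1)`. -/
theorem exists_coupling_cost_le_rho {D N : ℕ} (hD : 1 ≤ D) (hN : 2 ≤ N)
    (x : Fin N → EuclideanSpace ℝ (Fin D)) (hx : Function.Injective x)
    (ε : ℝ) (hε : 0 < ε) (ρ : ℝ) (hρpos : 0 < ρ) (hρ : ∀ i j, ‖x i - x j‖ ≤ ρ) :
    ∃ lam : Measure (EuclideanSpace ℝ (Fin D) × EuclideanSpace ℝ (Fin D)),
      IsProbabilityMeasure lam ∧
      lam.map Prod.fst = mixtureMeasure hN x ε ∧
      lam.map Prod.snd = empiricalMeasure x ∧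
      ∫⁻ p, ENNReal.ofReal (‖p.1 - p.2‖ ^ 2) ∂lam ≤
        ENNReal.ofReal (ρ ^ 2 * (ε ^ 2 * (D : ℝ) + 1)) :=
  exists_coupling_cost_le_rho_general hN x hx ε hε ρ hρ
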